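/- Let R = ℂ[A_{jk}, B_{jk} : 1 ≤ j,k ≤ 3] be the polynomial ring in the entries of two 3×3 matrices of indeterminates A and B (j row, k column). Define a₁ := A_{11}, b₁ := B_{11}, a₁₂ := A_{11}A_{22} − A_{12}A_{21}, a₁₃ := A_{11}A_{23} − A_{13}A_{21}, b₁₂ := B_{11}B_{22} − B_{12}B_{21}, b₁₃ := B_{11}B_{23} − B_{13}B_{21}, (ab)₁₂ := A_{11}B_{12} − A_{12}B_{11}, (aabb)_{1,2,1,3} := a₁₂·b₁₃ − a₁₃·b₁₂, (aab) := det of the 3×3 matrix with rows (A_{11},A_{12},A_{13}), (A_{21},A_{22},A_{23}), (B_{11},B_{12},B_{13}), and (abb) := det of the 3×3 matrix with rows (A_{11},A_{12},A_{13}), (B_{11},B_{12},B_{13}), (B_{21},B_{22},B_{23}). Then the identity (ab)₁₂·(aabb)_{1,2,1,3} = (aab)·a₁·b₁₂ + (abb)·a₁₂·b₁ holds in R. -/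
import Mathlib


open MvPolynomial Finset

/-- Entry `A_{jk}` (row `j`, column `k`) of the first matrix of indeterminates. -/
noncomputable abbrev A (j k : Fin 3) : MvPolynomial (Fin 2 × Fin 3 × Fin 3) ℂ :=
  X ((0 : Fin 2), j, k)

/-- Entry `B_{jk}` (row `j`, column `k`) of the second matrix of indeterminates. -/
noncomputable abbrev B (j k : Fin 3) : MvPolynomial (Fin 2 × Fin 3 × Fin 3) ℂ :=
  X ((1 : Fin 2), j, k)

noncomputable abbrev a₁ := A 0 0
noncomputable abbrev b₁ := B 0 0
noncomputable abbrev a₁₂ := A 0 0 * A 1 1 - A 0 1 * A 1 0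
noncomputable abbrev a₁₃ := A 0 0 * A 1 2 - A 0 2 * A 1 0
noncomputable abbrev b₁₂ := B 0 0 * B 1 1 - B 0 1 * B 1 0
noncomputable abbrev b₁₃ := B 0 0 * B 1 2 - B 0 2 * B 1 0
noncomputable abbrev ab₁₂ := A 0 0 * B 0 1 - A 0 1 * B 0 0
noncomputable abbrev aabb := a₁₂ * b₁₃ - a₁₃ * b₁₂
noncomputable abbrev aab : MvPolynomial (Fin 2 × Fin 3 × Fin 3) ℂ :=
  Matrix.det !![A 0 0, A 0 1, A 0 2; A 1 0, A 1 1, A 1 2; B 0 0, B 0 1, B 0 2]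
noncomputable abbrev abb : MvPolynomial (Fin 2 × Fin 3 × Fin 3) ℂ :=
  Matrix.det !![A 0 0, A 0 1, A 0 2; B 0 0, B 0 1, B 0 2; B 1 0, B 1 1, B 1 2]

/-- The determinantal identity
`(ab)₁₂ (aabb)₁₂₁₃ = (aab) a₁ b₁₂ + (abb) a₁₂ b₁`. -/
theorem determinantal_identity :
    ab₁₂ * aabb = aab * a₁ * b₁₂ + abb * a₁₂ * b₁ := by
  simp [Matrix.det_fin_three]
  ring
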